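/- For every s > 1: | K̃_{1,2}(s) | ≤ s^{−3/2} · ( 2 + (2/3) · (1 − s^{−2})^{−1} + log((s+1)/(s−1)) ). -/

import Mathlib

/-!
Writing `x = s⁻¹`, the Taylor series of `log ((1 + x) / (1 - x))` is `2x + 2x³/3 + 2x⁵/5 + ⋯`; its
tail after `2x` is dominated by the geometric series `(2/3) |x|³ / (1 - x²)`. Factoring
`s^{-3/2}` out of `K̃_{1,2}(s)` leaves `s³ (log ((s+1)/(s-1)) - 2/s) + log ((s+1)/(s-1)) - 2s/(s+1)`:
the slowly decaying terms `2 s^{1/2}` cancel, and the remaining summands are bounded by that tail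
estimate, by the logarithm itself, and by `2`.
-/

open Real Set

/-- The kernel `K̃_{1,2}(s)` (simplified form, valid for `s > 1`). -/
noncomputable def Ktilde12 (s : ℝ) : ℝ :=
  (s ^ ((3 : ℝ) / 2) + s ^ (-(3 : ℝ) / 2)) * Real.log ((s + 1) / (s - 1))
    - 2 * s ^ (-(1 : ℝ) / 2) * (s ^ 2 + s + 1) / (s + 1)

theorem hasSum_log_div_sub_two_mul {x : ℝ} (h : |x| < 1) :
    HasSum (fun k : ℕ => 2 * x ^ (2 * k + 3) / (2 * k + 3)) (log ((1 + x) / (1 - x)) - 2 * x) := by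
  have hx := abs_lt.mp h
  have hterm (k : ℕ) : 2 * (2 * ((k : ℝ) + 1) + 1)⁻¹ * x ^ (2 * (k + 1) + 1)
      = 2 * x ^ (2 * k + 3) / (2 * k + 3) := by
    ring
  rw [log_div (by linarith) (by linarith)]
  simpa [hterm] using (hasSum_nat_add_iff' 1).mpr (hasSum_log_sub_log_of_abs_lt_one h)

theorem abs_log_div_sub_two_mul_le {x : ℝ} (h : |x| < 1) :
    |log ((1 + x) / (1 - x)) - 2 * x| ≤ 2 / 3 * |x| ^ 3 / (1 - x ^ 2) := by
  have hx2 : |x ^ 2| < 1 := by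
    rw [abs_pow]
    exact pow_lt_one₀ (abs_nonneg x) h two_ne_zero
  have hgeom : HasSum (fun k : ℕ => 2 / 3 * |x| ^ 3 * (x ^ 2) ^ k) (2 / 3 * |x| ^ 3 / (1 - x ^ 2)) :=
    (hasSum_geometric_of_abs_lt_one hx2).mul_left _
  refine (hasSum_log_div_sub_two_mul h).norm_le_of_bounded hgeom fun k => ?_
  have hk : (3 : ℝ) ≤ 2 * k + 3 := by linarith [k.cast_nonneg (α := ℝ)]
  have hpow : |x| ^ (2 * k + 3) = |x| ^ 3 * (x ^ 2) ^ k := by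
    rw [← sq_abs, ← pow_mul, ← pow_add, add_comm]
  have hP : 0 ≤ |x| ^ 3 * (x ^ 2) ^ k := by positivity
  rw [Real.norm_eq_abs, abs_div, abs_mul, abs_pow, hpow, abs_two,
    abs_of_pos (by positivity : (0 : ℝ) < 2 * k + 3), div_le_iff₀ (by positivity)]
  nlinarith [mul_le_mul_of_nonneg_left hk hP]

theorem abs_log_div_sub_two_div_le {s : ℝ} (hs : 1 < s) :
    |log ((s + 1) / (s - 1)) - 2 / s| ≤ 2 / 3 * (s ^ 3)⁻¹ / (1 - (s ^ 2)⁻¹) := by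
  have hs0 : 0 < s := by linarith
  have hx : |s⁻¹| < 1 := by
    rw [abs_of_pos (inv_pos.mpr hs0)]
    exact inv_lt_one_of_one_lt₀ hs
  have key := abs_log_div_sub_two_mul_le hx
  rwa [abs_of_pos (inv_pos.mpr hs0), inv_pow, inv_pow, ← div_eq_mul_inv,
    show (1 + s⁻¹) / (1 - s⁻¹) = (s + 1) / (s - 1) by field_simp] at key

theorem Ktilde12_eq {s : ℝ} (hs : 0 < s) :
    Ktilde12 s = s ^ (-(3 : ℝ) / 2) *
      (s ^ 3 * (log ((s + 1) / (s - 1)) - 2 / s) + log ((s + 1) / (s - 1)) - 2 * s / (s + 1)) := by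
  have h32 : s ^ ((3 : ℝ) / 2) = s ^ (-(3 : ℝ) / 2) * s ^ 3 := by
    rw [← rpow_natCast, ← rpow_add hs]; norm_num
  have h12 : s ^ (-(1 : ℝ) / 2) = s ^ (-(3 : ℝ) / 2) * s := by
    rw [← rpow_add_one hs.ne']; norm_num
  rw [Ktilde12, h32, h12]
  field_simp
  ring

/-- Decay estimate (A.20) of Appendix A.7.3:
`|K̃_{1,2}(s)| ≤ s^{-3/2}(2 + (2/3)(1 - s^{-2})⁻¹ + log((s+1)/(s-1)))` for `s > 1`. -/
theorem Ktilde12_decay :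
    ∀ s : ℝ, 1 < s →
      |Ktilde12 s|
        ≤ s ^ (-(3 : ℝ) / 2)
          * (2 + (2 / 3) * (1 - (s ^ 2)⁻¹)⁻¹ + Real.log ((s + 1) / (s - 1))) := by
  intro s hs
  have hs0 : 0 < s := by linarith
  set L := log ((s + 1) / (s - 1))
  have hL : 0 ≤ L := log_nonneg ((one_le_div (by linarith)).mpr (by linarith))
  have htail : s ^ 3 * |L - 2 / s| ≤ 2 / 3 * (1 - (s ^ 2)⁻¹)⁻¹ := by
    calc s ^ 3 * |L - 2 / s| ≤ s ^ 3 * (2 / 3 * (s ^ 3)⁻¹ / (1 - (s ^ 2)⁻¹)) :=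
          mul_le_mul_of_nonneg_left (abs_log_div_sub_two_div_le hs) (by positivity)
      _ = 2 / 3 * (1 - (s ^ 2)⁻¹)⁻¹ := by field_simp
  have hrat : 2 * s / (s + 1) ≤ 2 := (div_le_iff₀ (by linarith)).mpr (by linarith)
  rw [Ktilde12_eq hs0, abs_mul, abs_of_pos (rpow_pos_of_pos hs0 _)]
  refine mul_le_mul_of_nonneg_left ?_ (rpow_pos_of_pos hs0 _).le
  calc |s ^ 3 * (L - 2 / s) + L - 2 * s / (s + 1)|
      ≤ |s ^ 3 * (L - 2 / s)| + |L| + |2 * s / (s + 1)| :=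
        (abs_sub _ _).trans (add_le_add_left (abs_add_le _ _) _)
    _ = s ^ 3 * |L - 2 / s| + L + 2 * s / (s + 1) := by
        rw [abs_mul, abs_of_pos (pow_pos hs0 3), abs_of_nonneg hL,
          abs_of_pos (by positivity : (0 : ℝ) < 2 * s / (s + 1))]
    _ ≤ _ := by linarith
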